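/- Let 0 < a < 1 and let H(v) = |v| − √(1−a²)·|P_{e₃⊥}v| (the support function of the spindle body on the region −a < v₃/|v| < a). For a unit vector u with −a < u₃ < a, the reverse Weingarten operator R(u) = ∇(DH)(u) restricted to u⊥ satisfies R(u)(e₃ − u₃u) = e₃ − u₃u and R(u)(u × e₃) = (1 − √(1−a²)/√(1−u₃²))·(u × e₃). In particular, R(u) has eigenvalues 1 and 1 − √(1−a²)/√(1−u₃²) ∈ (0,1). -/

import Mathlib

/-!
The gradient of `H(v) = ‖v‖ - c ‖P v‖` (with `P` the orthogonal projection onto `K = e₃ᗮ`) is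
`v / ‖v‖ - c P v / ‖P v‖`, and the derivative of `x ↦ x / ‖x‖` is `‖x‖⁻¹` times the orthogonal
projection onto `xᗮ`. Hence at a unit vector `u`, `R(u) = proj_{uᗮ} - c ‖P u‖⁻¹ proj_{(P u)ᗮ} ∘ P`.
The vector `e₃ - u₃ u` is fixed by `proj_{uᗮ}` and is sent by `P` to a multiple of `P u`, which
`proj_{(P u)ᗮ}` kills; the vector `u × e₃` lies in `K ∩ uᗮ ∩ (P u)ᗮ`, so every projection fixes it.
Finally `‖P u‖ = √(1 - u₃²) > √(1 - a²) = c` because `|u₃| < a`.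
-/

open Set Metric

noncomputable def vec3 (a b c : ℝ) : EuclideanSpace ℝ (Fin 3) :=
  (WithLp.equiv 2 (Fin 3 → ℝ)).symm ![a, b, c]

open scoped RealInnerProductSpace

section
variable {E : Type*} [NormedAddCommGroup E] [InnerProductSpace ℝ E]

theorem hasStrictFDerivAt_norm {x : E} (hx : x ≠ 0) :
    HasStrictFDerivAt (‖·‖) (‖x‖⁻¹ • innerSL ℝ x) x := by
  have h := (hasStrictFDerivAt_norm_sq x).sqrt (by positivity)
  simp only [Real.sqrt_sq (norm_nonneg _)] at h
  convert h using 1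
  ext w
  simp
  ring

theorem hasFDerivAt_inv_norm_smul {x : E} (hx : x ≠ 0) :
    HasFDerivAt (fun v : E => ‖v‖⁻¹ • v) (‖x‖⁻¹ • (ℝ ∙ x)ᗮ.starProjection) x := by
  have hx' : ‖x‖ ≠ 0 := norm_ne_zero_iff.2 hx
  refine (((hasDerivAt_inv hx').comp_hasFDerivAt x
    (hasStrictFDerivAt_norm hx).hasFDerivAt).smul (hasFDerivAt_id x)).congr_fderiv ?_
  ext w
  simp [Submodule.starProjection_singleton]
  module

theorem starProjection_orthogonal_singleton_self (x : E) : (ℝ ∙ x)ᗮ.starProjection x = 0 :=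
  Submodule.starProjection_orthogonal_apply_eq_zero (Submodule.mem_span_singleton_self x)

theorem starProjection_orthogonal_singleton_of_inner_eq_zero {x w : E} (h : ⟪x, w⟫ = 0) :
    (ℝ ∙ x)ᗮ.starProjection w = w :=
  Submodule.starProjection_eq_self_iff.2 (Submodule.mem_orthogonal_singleton_iff_inner_right.2 h)

variable [CompleteSpace E] (K : Submodule ℝ E) [K.HasOrthogonalProjection] (c : ℝ)

/-- With `K = e₃ᗮ` and `c = √(1 - a²)` this is the support function of the spindle body. -/
noncomputable def spindleSupport (v : E) : ℝ := ‖v‖ - c * ‖K.starProjection v‖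

theorem hasGradientAt_spindleSupport {x : E} (hx : K.starProjection x ≠ 0) :
    HasGradientAt (spindleSupport K c)
      (‖x‖⁻¹ • x - c • ‖K.starProjection x‖⁻¹ • K.starProjection x) x := by
  have hx₀ : x ≠ 0 := by rintro rfl; exact hx (map_zero _)
  rw [hasGradientAt_iff_hasFDerivAt]
  refine ((hasStrictFDerivAt_norm hx₀).hasFDerivAt.sub
    (((hasStrictFDerivAt_norm hx).hasFDerivAt.comp x
      K.starProjection.hasFDerivAt).const_mul c)).congr_fderiv ?_
  ext w
  have hidem : ⟪K.starProjection x, K.starProjection w⟫ = ⟪K.starProjection x, w⟫ := by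
    rw [← K.inner_starProjection_left_eq_right,
      Submodule.starProjection_eq_self_iff.2 (K.starProjection_apply_mem x)]
  simp [InnerProductSpace.toDual_apply_apply, hidem]

theorem hasFDerivAt_gradient_spindleSupport {u : E}
    (hu : K.starProjection u ≠ 0) :
    HasFDerivAt (gradient (spindleSupport K c))
      (‖u‖⁻¹ • (ℝ ∙ u)ᗮ.starProjection -
        c • (‖K.starProjection u‖⁻¹ • (ℝ ∙ K.starProjection u)ᗮ.starProjection).comp
          K.starProjection) u := by
  have hu₀ : u ≠ 0 := by rintro rfl; exact hu (map_zero _)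
  have hG := (hasFDerivAt_inv_norm_smul hu₀).sub
    (((hasFDerivAt_inv_norm_smul hu).comp u K.starProjection.hasFDerivAt).const_smul c)
  refine hG.congr_of_eventuallyEq ?_
  filter_upwards [(isOpen_ne_fun K.starProjection.continuous continuous_const).mem_nhds hu]
    with v hv
  exact (hasGradientAt_spindleSupport K c hv).gradient

theorem fderiv_gradient_spindleSupport_apply_starProjection {u e : E}
    (hu : K.starProjection u ≠ 0) (he : e ∈ Kᗮ) :
    fderiv ℝ (gradient (spindleSupport K c)) u ((ℝ ∙ u)ᗮ.starProjection e) =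
      ‖u‖⁻¹ • (ℝ ∙ u)ᗮ.starProjection e := by
  have hPe : K.starProjection e = 0 := K.starProjection_apply_eq_zero_iff.2 he
  have hPQe : K.starProjection ((ℝ ∙ u)ᗮ.starProjection e) =
      -(⟪u, e⟫ / ‖u‖ ^ 2) • K.starProjection u := by
    simp [Submodule.starProjection_singleton, hPe]
  have hQQe : (ℝ ∙ u)ᗮ.starProjection ((ℝ ∙ u)ᗮ.starProjection e) =
      (ℝ ∙ u)ᗮ.starProjection e :=
    Submodule.starProjection_eq_self_iff.2 (Submodule.starProjection_apply_mem _ e)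
  rw [(hasFDerivAt_gradient_spindleSupport K c hu).fderiv]
  simp only [sub_apply, smul_apply, ContinuousLinearMap.comp_apply, hQQe, hPQe, map_smul,
    starProjection_orthogonal_singleton_self, smul_zero, sub_zero]

theorem fderiv_gradient_spindleSupport_apply_of_mem {u w : E} (hu : K.starProjection u ≠ 0)
    (hw : w ∈ K) (huw : ⟪u, w⟫ = 0) :
    fderiv ℝ (gradient (spindleSupport K c)) u w =
      (‖u‖⁻¹ - c / ‖K.starProjection u‖) • w := by
  have hPw : K.starProjection w = w := Submodule.starProjection_eq_self_iff.2 hw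
  have hPuw : ⟪K.starProjection u, w⟫ = 0 := by
    rw [K.inner_starProjection_left_eq_right, hPw, huw]
  rw [(hasFDerivAt_gradient_spindleSupport K c hu).fderiv]
  simp [hPw, starProjection_orthogonal_singleton_of_inner_eq_zero huw,
    starProjection_orthogonal_singleton_of_inner_eq_zero hPuw]
  module
end

section
open EuclideanSpace

theorem vec3_zero_zero_one : vec3 0 0 1 = single 2 1 := by
  ext i; fin_cases i <;> simp [vec3]

theorem norm_vec3 (x y z : ℝ) : ‖vec3 x y z‖ = √(x ^ 2 + y ^ 2 + z ^ 2) := by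
  simp [EuclideanSpace.norm_eq, vec3, Fin.sum_univ_three]

theorem starProjection_orthogonal_single_two (v : EuclideanSpace ℝ (Fin 3)) :
    (ℝ ∙ single 2 1)ᗮ.starProjection v = vec3 (v 0) (v 1) 0 := by
  ext i; fin_cases i <;> simp [vec3, Submodule.starProjection_singleton, inner_single_left]

theorem vec3_mem_orthogonal_single_two (x y : ℝ) : vec3 x y 0 ∈ (ℝ ∙ single 2 1)ᗮ := by
  rw [Submodule.mem_orthogonal_singleton_iff_inner_right]
  simp [vec3, inner_single_left]

theorem norm_starProjection_orthogonal_single_two {u : EuclideanSpace ℝ (Fin 3)} (hu : ‖u‖ = 1) :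
    ‖(ℝ ∙ single 2 1)ᗮ.starProjection u‖ = √(1 - u 2 ^ 2) := by
  have h := EuclideanSpace.real_norm_sq_eq u
  rw [hu, Fin.sum_univ_three] at h
  rw [starProjection_orthogonal_single_two, norm_vec3]
  congr 1
  linarith

end

theorem stmt_17_general (a : ℝ) (ha1 : a < 1)
    (H : EuclideanSpace ℝ (Fin 3) → ℝ)
    (hH : H = fun v => ‖v‖ - Real.sqrt (1 - a ^ 2) * Real.sqrt ((v 0) ^ 2 + (v 1) ^ 2))
    (u : EuclideanSpace ℝ (Fin 3)) (hu : ‖u‖ = 1)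
    (hu₁ : -a < u 2) (hu₂ : u 2 < a)
    (R : EuclideanSpace ℝ (Fin 3) →L[ℝ] EuclideanSpace ℝ (Fin 3))
    (hR : R = fderiv ℝ (gradient H) u) :
    R (vec3 0 0 1 - u 2 • u) = vec3 0 0 1 - u 2 • u ∧
    R (vec3 (u 1) (-(u 0)) 0) =
      (1 - Real.sqrt (1 - a ^ 2) / Real.sqrt (1 - (u 2) ^ 2)) • vec3 (u 1) (-(u 0)) 0 ∧
    0 < 1 - Real.sqrt (1 - a ^ 2) / Real.sqrt (1 - (u 2) ^ 2) ∧
    1 - Real.sqrt (1 - a ^ 2) / Real.sqrt (1 - (u 2) ^ 2) < 1 := by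
  set K := (ℝ ∙ EuclideanSpace.single (2 : Fin 3) (1 : ℝ))ᗮ
  have hHK : H = spindleSupport K √(1 - a ^ 2) := by
    funext v
    simp only [hH, spindleSupport, K, starProjection_orthogonal_single_two, norm_vec3]
    ring_nf
  have hPu : ‖K.starProjection u‖ = √(1 - u 2 ^ 2) := norm_starProjection_orthogonal_single_two hu
  have hu2 : u 2 ^ 2 < a ^ 2 := sq_lt_sq' hu₁ hu₂
  have hPu_pos : 0 < ‖K.starProjection u‖ := by
    rw [hPu]; exact Real.sqrt_pos.2 (by nlinarith)
  have hPu0 : K.starProjection u ≠ 0 := norm_pos_iff.1 hPu_pos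
  have hc : 0 < √(1 - a ^ 2) := Real.sqrt_pos.2 (by nlinarith)
  have hcP : √(1 - a ^ 2) < ‖K.starProjection u‖ := by
    rw [hPu]; exact Real.sqrt_lt_sqrt (by nlinarith) (by linarith)
  subst hR
  rw [hHK, ← hPu]
  refine ⟨?_, ?_, ?_, ?_⟩
  · have hQ : (ℝ ∙ u)ᗮ.starProjection (EuclideanSpace.single 2 1) = vec3 0 0 1 - u 2 • u := by
      simp [Submodule.starProjection_singleton, hu, EuclideanSpace.inner_single_right,
        vec3_zero_zero_one]
    have he : EuclideanSpace.single (2 : Fin 3) (1 : ℝ) ∈ Kᗮ :=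
      Submodule.le_orthogonal_orthogonal _ (Submodule.mem_span_singleton_self _)
    simpa [hQ, hu] using fderiv_gradient_spindleSupport_apply_starProjection K _ hPu0 he
  · rw [fderiv_gradient_spindleSupport_apply_of_mem K _ hPu0 (vec3_mem_orthogonal_single_two _ _)
      (by simp [vec3, PiLp.inner_apply, Fin.sum_univ_three]; ring), hu, inv_one]
  · linarith [(div_lt_one hPu_pos).2 hcP]
  · linarith [div_pos hc hPu_pos]

theorem stmt_17 (a : ℝ) (ha : 0 < a) (ha1 : a < 1)
    (H : EuclideanSpace ℝ (Fin 3) → ℝ)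
    (hH : H = fun v => ‖v‖ - Real.sqrt (1 - a ^ 2) * Real.sqrt ((v 0) ^ 2 + (v 1) ^ 2))
    (u : EuclideanSpace ℝ (Fin 3)) (hu : ‖u‖ = 1)
    (hu₁ : -a < u 2) (hu₂ : u 2 < a)
    (R : EuclideanSpace ℝ (Fin 3) →L[ℝ] EuclideanSpace ℝ (Fin 3))
    (hR : R = fderiv ℝ (gradient H) u) :
    R (vec3 0 0 1 - u 2 • u) = vec3 0 0 1 - u 2 • u ∧
    R (vec3 (u 1) (-(u 0)) 0) =
      (1 - Real.sqrt (1 - a ^ 2) / Real.sqrt (1 - (u 2) ^ 2)) • vec3 (u 1) (-(u 0)) 0 ∧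
    0 < 1 - Real.sqrt (1 - a ^ 2) / Real.sqrt (1 - (u 2) ^ 2) ∧
    1 - Real.sqrt (1 - a ^ 2) / Real.sqrt (1 - (u 2) ^ 2) < 1 :=
  stmt_17_general a ha1 H hH u hu hu₁ hu₂ R hR
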